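/- Let A be a graded-commutative DGA over ℚ, n ≥ 2, a ∈ A₁ with da = 0, r ∈ A₀, b := a − dr, ρ_k ∈ A₁ (1 ≤ k ≤ n) with dρ_k = ρ_{k−1}·a (ρ₀ := 0), and E ∈ A_{−1}. Set r' := r + dE, P_m := Σ_{k=0}^{m−1} (1/k!) ρ_{m−k}·r^k and P'_m := Σ_{k=0}^{m−1} (1/k!) ρ_{m−k}·(r')^k for 2 ≤ m ≤ n, and for m ≥ 2 define Δ_m := Σ_{s=1}^{m−1} Σ_{t=1}^{s} (1/s!) C(s,t) ρ_{m−s}·r^{s−t}·(dE)^t and Ξ_m := Σ_{s=1}^{m−1} Σ_{t=1}^{s} (1/s!) C(s,t) ρ_{m−s}·r^{s−t}·E·(dE)^{t−1}, with Δ₁ := 0 and Ξ₁ := 0 (C(s,t) denotes the binomial coefficient). Then: (i) P'_m − P_m = Δ_m for 2 ≤ m ≤ n; and (ii) dΞ_m = −Δ_m − Ξ_{m−1}·b for 2 ≤ m ≤ n. -/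

import Mathlib

noncomputable section

/-- A graded-commutative differential graded algebra over `ℚ`. -/
structure GCDGA (A : Type*) [Ring A] [Algebra ℚ A] where
  deg : ℤ → Submodule ℚ A
  decomp : DirectSum.Decomposition deg
  one_mem : (1 : A) ∈ deg 0
  mul_mem : ∀ {i j : ℤ} {x y : A}, x ∈ deg i → y ∈ deg j → x * y ∈ deg (i + j)
  d : A →ₗ[ℚ] A
  d_sq : ∀ x : A, d (d x) = 0
  d_deg : ∀ {i : ℤ} {x : A}, x ∈ deg i → d x ∈ deg (i + 1)
  leibniz : ∀ {i : ℤ} (x y : A), x ∈ deg i →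
    d (x * y) = d x * y + ((-1 : ℚ) ^ i) • (x * d y)
  gcomm : ∀ {i j : ℤ} (x y : A), x ∈ deg i → y ∈ deg j →
    x * y = ((-1 : ℚ) ^ (i * j)) • (y * x)

/-- `P_m := ∑_{k=0}^{m−1} (1/k!) ρ_{m−k} · r^k`. -/
def Pm {A : Type*} [Ring A] [Algebra ℚ A] (ρ : ℕ → A) (r : A) (m : ℕ) : A :=
  ∑ k ∈ Finset.range m, ((k.factorial : ℚ))⁻¹ • (ρ (m - k) * r ^ k)

/-- `Δ_m := ∑_{s=1}^{m−1} ∑_{t=1}^{s} (1/s!) C(s,t) ρ_{m−s}·r^{s−t}·(dE)^t`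
(so `Δ₁ = 0`).  Here `dE` is passed as the element `de`. -/
def DeltaM {A : Type*} [Ring A] [Algebra ℚ A] (ρ : ℕ → A) (r de : A) (m : ℕ) : A :=
  ∑ s ∈ Finset.Icc 1 (m - 1), ∑ t ∈ Finset.Icc 1 s,
    (((s.factorial : ℚ))⁻¹ * (s.choose t : ℚ)) • (ρ (m - s) * r ^ (s - t) * de ^ t)

/-- `Ξ_m := ∑_{s=1}^{m−1} ∑_{t=1}^{s} (1/s!) C(s,t) ρ_{m−s}·r^{s−t}·E·(dE)^{t−1}`
(so `Ξ₁ = 0`). -/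
def XiM {A : Type*} [Ring A] [Algebra ℚ A] (ρ : ℕ → A) (r E de : A) (m : ℕ) : A :=
  ∑ s ∈ Finset.Icc 1 (m - 1), ∑ t ∈ Finset.Icc 1 s,
    (((s.factorial : ℚ))⁻¹ * (s.choose t : ℚ)) • (ρ (m - s) * r ^ (s - t) * E * de ^ (t - 1))

/-!
Write `Ξ_m = ∑_s (1/s!) ρ_{m-s} F_s` with `F_s = ∑_t C(s,t) r^{s-t} E (dE)^{t-1}`. By the
binomial theorem both `P'_m - P_m` and `Δ_m` equal `∑_s (1/s!) ρ_{m-s} ((r + dE)^s - r^s)`.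
Since `d(E (dE)^j) = (dE)^{j+1}` and `C(s+1,t) (s+1-t) = (s+1) C(s,t)`, one gets
`d F_{s+1} = (s+1) dr F_s + (r + dE)^{s+1} - r^{s+1}`. Differentiating `ρ_{m-s} F_s` by Leibniz and
moving the odd element `F_s` to the left of `a` and `dr` (which costs a sign) gives three sums:
`-Ξ_{m-1} a` (its top term vanishes as `ρ_0 = 0`), `-Δ_m`, and, after shifting the index
(`F_0 = 0`), `Ξ_{m-1} dr`.
-/

namespace GCDGA

variable {A : Type*} [Ring A] [Algebra ℚ A] (G : GCDGA A) {x y : A} {i j k : ℤ}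

theorem mul_mem_of_add_eq (hx : x ∈ G.deg i) (hy : y ∈ G.deg j) (h : i + j = k) :
    x * y ∈ G.deg k :=
  h ▸ G.mul_mem hx hy

theorem d_mem_of_add_eq (hx : x ∈ G.deg i) (h : i + 1 = j) : G.d x ∈ G.deg j :=
  h ▸ G.d_deg hx

theorem pow_mem_zero (hx : x ∈ G.deg 0) : ∀ p : ℕ, x ^ p ∈ G.deg 0
  | 0 => by simpa using G.one_mem
  | p + 1 => pow_succ x p ▸ G.mul_mem_of_add_eq (pow_mem_zero hx p) hx (zero_add 0)

theorem commute_of_mem_zero (hx : x ∈ G.deg 0) (hy : y ∈ G.deg j) : Commute x y := by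
  simpa [Commute, SemiconjBy] using G.gcomm x y hx hy

theorem mul_eq_neg_mul_of_odd (hx : x ∈ G.deg i) (hy : y ∈ G.deg j) (h : Odd (i * j)) :
    x * y = -(y * x) := by
  rw [G.gcomm x y hx hy, h.neg_one_zpow, neg_one_smul]

theorem d_mul_of_even (hx : x ∈ G.deg i) (hi : Even i) (y : A) :
    G.d (x * y) = G.d x * y + x * G.d y := by
  rw [G.leibniz x y hx, hi.neg_one_zpow, one_smul]

theorem d_mul_of_odd (hx : x ∈ G.deg i) (hi : Odd i) (y : A) :
    G.d (x * y) = G.d x * y - x * G.d y := by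
  rw [G.leibniz x y hx, hi.neg_one_zpow, neg_one_smul, sub_eq_add_neg]

theorem d_one : G.d 1 = 0 := by
  simpa using G.d_mul_of_even G.one_mem Even.zero 1

theorem d_pow_of_mem_zero (hx : x ∈ G.deg 0) (p : ℕ) :
    G.d (x ^ p) = p • (G.d x * x ^ (p - 1)) := by
  induction p with
  | zero => simp [G.d_one]
  | succ p ih =>
    rw [pow_succ, G.d_mul_of_even (G.pow_mem_zero hx p) Even.zero, ih,
      (G.commute_of_mem_zero (G.pow_mem_zero hx p) (G.d_mem_of_add_eq hx (zero_add 1))).eq]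
    cases p <;> simp [mul_assoc, ← pow_succ, add_mul]

end GCDGA

theorem Finset.sum_Icc_one_eq_sum_range {M : Type*} [AddCommMonoid M] (f : ℕ → M) (N : ℕ) :
    ∑ s ∈ Finset.Icc 1 N, f s = ∑ i ∈ Finset.range N, f (i + 1) := by
  rw [← Finset.Ico_add_one_right_eq_Icc, Finset.sum_Ico_eq_sum_range, add_tsub_cancel_right]
  simp only [add_comm]

open Finset

section Binomial

variable {A : Type*} [Ring A] [Algebra ℚ A]

theorem Commute.add_pow_sub_pow {r q : A} (h : Commute r q) (s : ℕ) :
    (r + q) ^ s - r ^ s = ∑ t ∈ Icc 1 s, (s.choose t : ℚ) • (r ^ (s - t) * q ^ t) := by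
  rw [add_comm, h.symm.add_pow, sum_range_succ', sum_Icc_one_eq_sum_range]
  simp only [pow_zero, one_mul, Nat.sub_zero, Nat.choose_zero_right, Nat.cast_one, mul_one,
    add_sub_cancel_right]
  refine sum_congr rfl fun i _ => ?_
  rw [Nat.cast_smul_eq_nsmul, nsmul_eq_mul', (h.pow_pow _ _).eq]

theorem DeltaM_succ {r q : A} (h : Commute r q) (ρ : ℕ → A) (N : ℕ) :
    DeltaM ρ r q (N + 1) = ∑ i ∈ range N,
      (((i + 1).factorial : ℚ))⁻¹ • (ρ (N - i) * ((r + q) ^ (i + 1) - r ^ (i + 1))) := by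
  rw [DeltaM, add_tsub_cancel_right, sum_Icc_one_eq_sum_range]
  refine sum_congr rfl fun i _ => ?_
  simp only [h.add_pow_sub_pow, mul_sum, smul_sum, mul_smul_comm, smul_smul, mul_assoc,
    Nat.add_sub_add_right]

theorem Pm_add_sub_Pm {r q : A} (h : Commute r q) (ρ : ℕ → A) (m : ℕ) :
    Pm ρ (r + q) m - Pm ρ r m = DeltaM ρ r q m := by
  rw [Pm, Pm, ← sum_sub_distrib]
  simp only [← smul_sub, ← mul_sub]
  cases m with
  | zero => simp [DeltaM]
  | succ N => simp [sum_range_succ', DeltaM_succ h, Nat.add_sub_add_right]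

def xiFactor (r E q : A) (s : ℕ) : A :=
  ∑ t ∈ Icc 1 s, (s.choose t : ℚ) • (r ^ (s - t) * E * q ^ (t - 1))

theorem XiM_succ (ρ : ℕ → A) (r E q : A) (N : ℕ) :
    XiM ρ r E q (N + 1) = ∑ i ∈ range N,
      (((i + 1).factorial : ℚ))⁻¹ • (ρ (N - i) * xiFactor r E q (i + 1)) := by
  rw [XiM, add_tsub_cancel_right, sum_Icc_one_eq_sum_range]
  refine sum_congr rfl fun i _ => ?_
  simp only [xiFactor, mul_sum, smul_sum, mul_smul_comm, smul_smul, mul_assoc,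
    Nat.add_sub_add_right]

end Binomial

namespace GCDGA

variable {A : Type*} [Ring A] [Algebra ℚ A] (G : GCDGA A) {r E : A}

theorem xiFactor_mem (hr : r ∈ G.deg 0) (hE : E ∈ G.deg (-1)) (s : ℕ) :
    xiFactor r E (G.d E) s ∈ G.deg (-1) := by
  have hdE : G.d E ∈ G.deg 0 := G.d_mem_of_add_eq hE (neg_add_cancel 1)
  refine Submodule.sum_mem _ fun t _ => Submodule.smul_mem _ _ ?_
  refine G.mul_mem_of_add_eq (G.mul_mem_of_add_eq (G.pow_mem_zero hr _) hE (zero_add _))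
    (G.pow_mem_zero hdE _) (add_zero _)

theorem d_pow_mul_mul_pow (hr : r ∈ G.deg 0) (hE : E ∈ G.deg (-1)) (p j : ℕ) :
    G.d (r ^ p * E * G.d E ^ j) =
      p • (G.d r * r ^ (p - 1) * E * G.d E ^ j) + r ^ p * G.d E ^ (j + 1) := by
  have hdE : G.d E ∈ G.deg 0 := G.d_mem_of_add_eq hE (neg_add_cancel 1)
  rw [mul_assoc, G.d_mul_of_even (G.pow_mem_zero hr p) Even.zero,
    G.d_mul_of_odd hE (by decide), G.d_pow_of_mem_zero hdE, G.d_sq, G.d_pow_of_mem_zero hr]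
  simp [mul_assoc, pow_succ']

theorem d_xiFactor_succ (hr : r ∈ G.deg 0) (hE : E ∈ G.deg (-1)) (S : ℕ) :
    G.d (xiFactor r E (G.d E) (S + 1)) =
      (S + 1) • (G.d r * xiFactor r E (G.d E) S) + ((r + G.d E) ^ (S + 1) - r ^ (S + 1)) := by
  have hdE : G.d E ∈ G.deg 0 := G.d_mem_of_add_eq hE (neg_add_cancel 1)
  simp only [xiFactor, map_sum, map_smul, G.d_pow_mul_mul_pow hr hE, smul_add, sum_add_distrib,
    (G.commute_of_mem_zero hr hdE).add_pow_sub_pow]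
  congr 1
  · rw [sum_Icc_succ_top (by omega), Nat.sub_self, zero_smul, smul_zero, add_zero, mul_sum,
      smul_sum]
    refine sum_congr rfl fun t ht => ?_
    have hcoef : ((S + 1).choose t : ℚ) * ((S + 1 - t : ℕ) : ℚ) = ((S + 1 : ℕ) : ℚ) * S.choose t := by
      rw [mul_comm _ (S.choose t : ℚ)]
      exact_mod_cast (Nat.choose_mul_succ_eq S t).symm
    rw [← Nat.cast_smul_eq_nsmul ℚ, ← Nat.cast_smul_eq_nsmul ℚ, smul_smul, hcoef, mul_smul_comm,
      smul_smul, Nat.sub_right_comm, Nat.add_sub_cancel, ← mul_assoc, ← mul_assoc]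
  · refine sum_congr rfl fun t ht => ?_
    rw [Nat.sub_add_cancel (mem_Icc.mp ht).1]

theorem d_mul_xiFactor_succ {a x y : A} (ha : a ∈ G.deg 1) (hr : r ∈ G.deg 0)
    (hE : E ∈ G.deg (-1)) (hx : x ∈ G.deg 1) (hdx : G.d x = y * a) (s : ℕ) :
    G.d (x * xiFactor r E (G.d E) (s + 1)) =
      -(y * xiFactor r E (G.d E) (s + 1) * a) - x * ((r + G.d E) ^ (s + 1) - r ^ (s + 1))
        + (s + 1) • (x * xiFactor r E (G.d E) s * G.d r) := by
  have hdr : G.d r ∈ G.deg 1 := G.d_mem_of_add_eq hr (zero_add 1)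
  rw [G.d_mul_of_odd hx odd_one, hdx, G.d_xiFactor_succ hr hE, mul_assoc,
    G.mul_eq_neg_mul_of_odd ha (G.xiFactor_mem hr hE _) (by decide), mul_add, mul_smul_comm,
    G.mul_eq_neg_mul_of_odd hdr (G.xiFactor_mem hr hE _) (by decide)]
  simp only [mul_neg, smul_neg, mul_assoc]
  abel

theorem d_XiM {n : ℕ} {a : A} (ha : a ∈ G.deg 1) (hr : r ∈ G.deg 0) {ρ : ℕ → A} (hρ0 : ρ 0 = 0)
    (hρ : ∀ k, 1 ≤ k → k ≤ n → ρ k ∈ G.deg 1)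
    (hdρ : ∀ k, 1 ≤ k → k ≤ n → G.d (ρ k) = ρ (k - 1) * a) (hE : E ∈ G.deg (-1))
    {N : ℕ} (hN : N + 2 ≤ n) :
    G.d (XiM ρ r E (G.d E) (N + 2)) =
      -DeltaM ρ r (G.d E) (N + 2) - XiM ρ r E (G.d E) (N + 1) * (a - G.d r) := by
  set F := xiFactor r E (G.d E)
  have hterm : ∀ i ∈ range (N + 1),
      G.d ((((i + 1).factorial : ℚ))⁻¹ • (ρ (N + 1 - i) * F (i + 1))) =
        -((((i + 1).factorial : ℚ))⁻¹ • (ρ (N - i) * F (i + 1)) * a)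
        - (((i + 1).factorial : ℚ))⁻¹ • (ρ (N + 1 - i) * ((r + G.d E) ^ (i + 1) - r ^ (i + 1)))
        + ((i.factorial : ℚ))⁻¹ • (ρ (N + 1 - i) * F i) * G.d r := by
    intro i hi
    have hk : 1 ≤ N + 1 - i := by grind
    have hkn : N + 1 - i ≤ n := by omega
    have hcoef : (((i + 1).factorial : ℚ))⁻¹ * ((i + 1 : ℕ) : ℚ) = ((i.factorial : ℚ))⁻¹ := by
      rw [Nat.factorial_succ, Nat.cast_mul, mul_inv, mul_comm, ← mul_assoc,
        mul_inv_cancel₀ (by positivity), one_mul]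
    rw [map_smul, G.d_mul_xiFactor_succ ha hr hE (hρ _ hk hkn) (hdρ _ hk hkn),
      show N + 1 - i - 1 = N - i by omega, ← Nat.cast_smul_eq_nsmul ℚ, smul_mul_assoc,
      smul_mul_assoc, ← hcoef, mul_smul]
    simp only [F, smul_sub, smul_add, smul_neg]
  have hshift : ∑ i ∈ range (N + 1), ((i.factorial : ℚ))⁻¹ • (ρ (N + 1 - i) * F i) =
      XiM ρ r E (G.d E) (N + 1) := by
    simp [sum_range_succ', F, xiFactor, XiM_succ, Nat.add_sub_add_right]
  have hdrop : ∑ i ∈ range (N + 1), (((i + 1).factorial : ℚ))⁻¹ • (ρ (N - i) * F (i + 1)) =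
      XiM ρ r E (G.d E) (N + 1) := by
    simp [sum_range_succ, hρ0, XiM_succ, F]
  rw [XiM_succ, map_sum, sum_congr rfl hterm, sum_add_distrib, sum_sub_distrib,
    sum_neg_distrib, ← sum_mul, ← sum_mul, hshift, hdrop,
    ← DeltaM_succ (G.commute_of_mem_zero hr (G.d_mem_of_add_eq hE (neg_add_cancel 1))), mul_sub]
  abel

end GCDGA

theorem modify_r_identities_general {A : Type*} [Ring A] [Algebra ℚ A] (G : GCDGA A)
    (n : ℕ)
    (a : A) (ha : a ∈ G.deg 1)
    (r : A) (hr : r ∈ G.deg 0)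
    (ρ : ℕ → A) (hρ0 : ρ 0 = 0)
    (hρ : ∀ k, 1 ≤ k → k ≤ n → ρ k ∈ G.deg 1)
    (hdρ : ∀ k, 1 ≤ k → k ≤ n → G.d (ρ k) = ρ (k - 1) * a)
    (E : A) (hE : E ∈ G.deg (-1))
    (b : A) (hb : b = a - G.d r)
    (r' : A) (hr' : r' = r + G.d E) :
    (∀ m, 2 ≤ m → m ≤ n →
      Pm ρ r' m - Pm ρ r m = DeltaM ρ r (G.d E) m) ∧
    (∀ m, 2 ≤ m → m ≤ n →
      G.d (XiM ρ r E (G.d E) m) =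
        -DeltaM ρ r (G.d E) m - XiM ρ r E (G.d E) (m - 1) * b) := by
  subst hb hr'
  have hrdE : Commute r (G.d E) :=
    G.commute_of_mem_zero hr (G.d_mem_of_add_eq hE (neg_add_cancel 1))
  refine ⟨fun m _ _ => Pm_add_sub_Pm hrdE ρ m, fun m hm hmn => ?_⟩
  obtain ⟨N, rfl⟩ := Nat.exists_eq_add_of_le' hm
  exact G.d_XiM ha hr hρ0 hρ hdρ hE hmn

/-- with `r' := r + dE`, one has
(i) `P'_m − P_m = Δ_m` and (ii) `dΞ_m = −Δ_m − Ξ_{m−1}·b`, for all `2 ≤ m ≤ n`. -/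
theorem modify_r_identities {A : Type*} [Ring A] [Algebra ℚ A] (G : GCDGA A)
    (n : ℕ) (hn : 2 ≤ n)
    (a : A) (ha : a ∈ G.deg 1) (hda : G.d a = 0)
    (r : A) (hr : r ∈ G.deg 0)
    (ρ : ℕ → A) (hρ0 : ρ 0 = 0)
    (hρ : ∀ k, 1 ≤ k → k ≤ n → ρ k ∈ G.deg 1)
    (hdρ : ∀ k, 1 ≤ k → k ≤ n → G.d (ρ k) = ρ (k - 1) * a)
    (E : A) (hE : E ∈ G.deg (-1))
    (b : A) (hb : b = a - G.d r)
    (r' : A) (hr' : r' = r + G.d E) :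
    (∀ m, 2 ≤ m → m ≤ n →
      Pm ρ r' m - Pm ρ r m = DeltaM ρ r (G.d E) m) ∧
    (∀ m, 2 ≤ m → m ≤ n →
      G.d (XiM ρ r E (G.d E) m) =
        -DeltaM ρ r (G.d E) m - XiM ρ r E (G.d E) (m - 1) * b) :=
  modify_r_identities_general G n a ha r hr ρ hρ0 hρ hdρ E hE b hb r' hr'

end
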